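/- An action theory ⟨S, E, X, I⟩ over finitely many actions satisfies the global Postulate PS* if and only if for every action a ∈ Act, the single-action theory ⟨S, E_a, X_a, I_a⟩ satisfies Postulate PS, provided the underlying multimodal logic is a fusion (independently axiomatized, no interaction between modalities). -/

import Mathlib

/-! Classical propositional formulas. -/
inductive PForm (α : Type) : Type
  | atom : α → PForm α
  | fls  : PForm α
  | not  : PForm α → PForm α
  | and  : PForm α → PForm α → PForm α
  | or   : PForm α → PForm α → PForm α
  | imp  : PForm α → PForm α → PForm α

def PForm.Sat {α : Type} (v : α → Prop) : PForm α → Prop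
  | atom p => v p
  | fls => False
  | not φ => ¬ Sat v φ
  | and φ ψ => Sat v φ ∧ Sat v ψ
  | or φ ψ => Sat v φ ∨ Sat v ψ
  | imp φ ψ => Sat v φ → Sat v ψ

/-- Classical (propositional) global consequence. -/
def EntailsCl {α : Type} (Γ : Set (PForm α)) (φ : PForm α) : Prop :=
  ∀ v : α → Prop, (∀ ψ ∈ Γ, PForm.Sat v ψ) → PForm.Sat v φ

/-- Multimodal formulas with one box per action. -/
inductive MForm (Act α : Type) : Type
  | atom : α → MForm Act α
  | fls  : MForm Act α
  | not  : MForm Act α → MForm Act α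
  | and  : MForm Act α → MForm Act α → MForm Act α
  | or   : MForm Act α → MForm Act α → MForm Act α
  | imp  : MForm Act α → MForm Act α → MForm Act α
  | box  : Act → MForm Act α → MForm Act α

def PForm.toM {Act α : Type} : PForm α → MForm Act α
  | .atom p => .atom p
  | .fls => .fls
  | .not φ => .not φ.toM
  | .and φ ψ => .and φ.toM ψ.toM
  | .or φ ψ => .or φ.toM ψ.toM
  | .imp φ ψ => .imp φ.toM ψ.toM

/-- A Kripke model for multimodal K. -/
structure KModel (Act α : Type) where
  W : Type
  R : Act → W → W → Prop
  V : W → α → Prop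

def MForm.Sat {Act α : Type} (M : KModel Act α) : M.W → MForm Act α → Prop
  | w, atom p => M.V w p
  | _, fls => False
  | w, not φ => ¬ Sat M w φ
  | w, and φ ψ => Sat M w φ ∧ Sat M w ψ
  | w, or φ ψ => Sat M w φ ∨ Sat M w ψ
  | w, imp φ ψ => Sat M w φ → Sat M w ψ
  | w, box a φ => ∀ w', M.R a w w' → Sat M w' φ

/-- Global truth in a model. -/
def Glob {Act α : Type} (M : KModel Act α) (Φ : MForm Act α) : Prop :=
  ∀ w : M.W, MForm.Sat M w Φ

/-- Global consequence in multimodal K. -/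
def ConsK {Act α : Type} (Γ : Set (MForm Act α)) (Φ : MForm Act α) : Prop :=
  ∀ M : KModel Act α, (∀ Ψ ∈ Γ, Glob M Ψ) → Glob M Φ

/-- Literals. -/
abbrev Lit (α : Type) := α × Bool

def Lit.Sat {α : Type} (v : α → Prop) (l : Lit α) : Prop :=
  if l.2 then v l.1 else ¬ v l.1

/-- A dependence relation `⇝ ⊆ Act × Lit`. -/
abbrev Dep (Act α : Type) := Act → Lit α → Prop

/-- `⇝`-models: along `R a`, literals independent of `a` persist. -/
def IsDepModel {Act α : Type} (dep : Dep Act α) (M : KModel Act α) : Prop :=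
  ∀ (a : Act) (w w' : M.W), M.R a w w' → ∀ p : α,
    (¬ dep a (p, true) → ¬ M.V w p → ¬ M.V w' p) ∧
    (¬ dep a (p, false) → M.V w p → M.V w' p)

/-- Dependence-based global consequence. -/
def ConsDep {Act α : Type} (dep : Dep Act α) (Γ : Set (MForm Act α)) (Φ : MForm Act α) : Prop :=
  ∀ M : KModel Act α, IsDepModel dep M → (∀ Ψ ∈ Γ, Glob M Ψ) → Glob M Φ

/-- An action theory: static laws `S`, effect laws `E` (antecedent/consequent
pairs), executability laws `X` (antecedents), inexecutability laws `I`
(antecedents). -/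
structure ActionTheory (Act α : Type) where
  S : Set (PForm α)
  E : Act → Set (PForm α × PForm α)
  X : Act → Set (PForm α)
  I : Act → Set (PForm α)

/-- `⟨a⟩Φ`. -/
def MForm.diam {Act α : Type} (a : Act) (Φ : MForm Act α) : MForm Act α :=
  .not (.box a (.not Φ))

/-- Effect law `A → [a]C`. -/
def effLaw {Act α : Type} (a : Act) (e : PForm α × PForm α) : MForm Act α :=
  .imp e.1.toM (.box a e.2.toM)

/-- Executability law `A → ⟨a⟩⊤`. -/
def exeLaw {Act α : Type} (a : Act) (A : PForm α) : MForm Act α :=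
  .imp A.toM (MForm.diam a (.not .fls))

/-- Inexecutability law `A → [a]⊥`. -/
def inexLaw {Act α : Type} (a : Act) (A : PForm α) : MForm Act α :=
  .imp A.toM (.box a .fls)

variable {Act α : Type}

def staticForms (T : ActionTheory Act α) : Set (MForm Act α) := PForm.toM '' T.S
def effForms (T : ActionTheory Act α) (a : Act) : Set (MForm Act α) := effLaw a '' T.E a
def exeForms (T : ActionTheory Act α) (a : Act) : Set (MForm Act α) := exeLaw a '' T.X a
def inexForms (T : ActionTheory Act α) (a : Act) : Set (MForm Act α) := inexLaw a '' T.I a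

/-- The action theory of the single action `a`:  `S ∪ E_a ∪ X_a ∪ I_a`. -/
def formsFor (T : ActionTheory Act α) (a : Act) : Set (MForm Act α) :=
  staticForms T ∪ effForms T a ∪ exeForms T a ∪ inexForms T a

/-- The whole action theory:  `S ∪ E ∪ X ∪ I`. -/
def allForms (T : ActionTheory Act α) : Set (MForm Act α) :=
  staticForms T ∪ (⋃ a, effForms T a) ∪ (⋃ a, exeForms T a) ∪ (⋃ a, inexForms T a)

/-- Postulate PS for action `a`: no implicit static laws. -/
def PS (T : ActionTheory Act α) (dep : Dep Act α) (a : Act) : Prop :=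
  ∀ φ : PForm α, ConsDep dep (formsFor T a) φ.toM → EntailsCl T.S φ

/-- Postulate PS*: no implicit static laws for the whole theory. -/
def PSstar (T : ActionTheory Act α) (dep : Dep Act α) : Prop :=
  ∀ φ : PForm α, ConsDep dep (allForms T) φ.toM → EntailsCl T.S φ

/-- Postulate PI for action `a`: no implicit inexecutability laws. -/
def PIpost (T : ActionTheory Act α) (dep : Dep Act α) (a : Act) : Prop :=
  ∀ A : PForm α, ConsDep dep (formsFor T a) (inexLaw a A) →
    ConsK (staticForms T ∪ inexForms T a) (inexLaw a A)

/-- Postulate PI*: no implicit inexecutability laws for the whole theory. -/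
def PIstar (T : ActionTheory Act α) (dep : Dep Act α) : Prop :=
  ∀ (a : Act) (A : PForm α), ConsDep dep (allForms T) (inexLaw a A) →
    ConsK (staticForms T ∪ ⋃ a', inexForms T a') (inexLaw a A)

/-!
The direction PS* ⇒ PS is monotonicity of `⊨_⇝` in the premises. For the converse, take as worlds
the valuations satisfying `S`, and let `u` reach `u'` by `a` whenever some `⇝`-model of
`S, E_a, X_a, I_a` has an `a`-transition between worlds labelled `u` and `u'`. The frame condition,
the effect laws and the inexecutability laws transfer from these witnesses one transition at a
time, because no law mentions two different actions. Executability laws need every valuation of `S`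
to label a world of some model of the `a`-theory, and this is what PS for `a` says once it is
applied to the negated characteristic formula of that valuation (`α` is finite). Every valuation of
`S` is then a world of a `⇝`-model of the whole theory, which is PS*.
-/

theorem PForm.sat_toM (M : KModel Act α) (w : M.W) (φ : PForm α) :
    MForm.Sat M w φ.toM ↔ φ.Sat (M.V w) := by
  induction φ with
  | atom p => rfl
  | fls => rfl
  | not φ ih => exact not_congr ih
  | and φ ψ ih₁ ih₂ => exact and_congr ih₁ ih₂
  | or φ ψ ih₁ ih₂ => exact or_congr ih₁ ih₂
  | imp φ ψ ih₁ ih₂ => exact imp_congr ih₁ ih₂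

theorem PForm.sat_toM_iff_of_V_eq {M N : KModel Act α} {u : M.W} {w : N.W} (h : N.V w = M.V u)
    (φ : PForm α) : MForm.Sat N w φ.toM ↔ MForm.Sat M u φ.toM := by
  rw [PForm.sat_toM, PForm.sat_toM, h]

namespace PForm

def conj : List (PForm α) → PForm α
  | [] => not fls
  | φ :: l => and φ (conj l)

theorem sat_conj (v : α → Prop) (l : List (PForm α)) :
    (conj l).Sat v ↔ ∀ φ ∈ l, φ.Sat v := by
  induction l with
  | nil => simp [conj, Sat]
  | cons φ l ih => simp [conj, Sat, ih]

open Classical in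
noncomputable def lit (u : α → Prop) (p : α) : PForm α :=
  if u p then atom p else not (atom p)

theorem sat_lit (u v : α → Prop) (p : α) : (lit u p).Sat v ↔ (v p ↔ u p) := by
  by_cases h : u p <;> simp [lit, h, Sat]

noncomputable def charForm [Fintype α] (u : α → Prop) : PForm α :=
  conj (Finset.univ.toList.map (lit u))

theorem sat_charForm [Fintype α] (u v : α → Prop) : (charForm u).Sat v ↔ v = u := by
  simp [charForm, sat_conj, sat_lit, funext_iff]

end PForm

theorem ConsDep.mono {dep : Dep Act α} {Γ Δ : Set (MForm Act α)} {Φ : MForm Act α}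
    (h : ConsDep dep Γ Φ) (hΓΔ : Γ ⊆ Δ) : ConsDep dep Δ Φ :=
  fun M hM hΔ => h M hM fun Ψ hΨ => hΔ Ψ (hΓΔ hΨ)

theorem formsFor_subset_allForms (T : ActionTheory Act α) (a : Act) :
    formsFor T a ⊆ allForms T :=
  Set.union_subset_union (Set.union_subset_union
    (Set.union_subset_union subset_rfl (Set.subset_iUnion (effForms T) a))
    (Set.subset_iUnion (exeForms T) a)) (Set.subset_iUnion (inexForms T) a)

theorem exists_depModel_valuation_eq [Fintype α] {dep : Dep Act α} {Γ : Set (MForm Act α)}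
    {S : Set (PForm α)} (hΓ : ∀ φ : PForm α, ConsDep dep Γ φ.toM → EntailsCl S φ)
    {u : α → Prop} (hu : ∀ ψ ∈ S, ψ.Sat u) :
    ∃ (N : KModel Act α) (w : N.W), IsDepModel dep N ∧ (∀ Ψ ∈ Γ, Glob N Ψ) ∧ N.V w = u := by
  by_contra! hno
  have hcons : ConsDep dep Γ (PForm.not (PForm.charForm u)).toM := fun N hN hN' w => by
    rw [PForm.sat_toM]
    exact fun hw => hno N w hN hN' ((PForm.sat_charForm u _).1 hw)
  exact hΓ _ hcons u hu ((PForm.sat_charForm u u).2 rfl)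

namespace ActionTheory

variable (T : ActionTheory Act α) (dep : Dep Act α)

def fusedModel : KModel Act α where
  W := {u : α → Prop // ∀ ψ ∈ T.S, ψ.Sat u}
  R a u u' := ∃ (N : KModel Act α) (w w' : N.W), IsDepModel dep N ∧
    (∀ Ψ ∈ formsFor T a, Glob N Ψ) ∧ N.R a w w' ∧ N.V w = u.1 ∧ N.V w' = u'.1
  V u := u.1

theorem isDepModel_fusedModel : IsDepModel dep (fusedModel T dep) := by
  rintro a u u' ⟨N, w, w', hN, -, hr, hw, hw'⟩ p
  have h := hN a w w' hr p
  rw [hw, hw'] at h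
  exact h

theorem glob_fusedModel_static {ψ : PForm α} (hψ : ψ ∈ T.S) : Glob (fusedModel T dep) ψ.toM :=
  fun u => (PForm.sat_toM _ u ψ).2 (u.2 ψ hψ)

theorem glob_fusedModel_effLaw {a : Act} {e : PForm α × PForm α} (he : e ∈ T.E a) :
    Glob (fusedModel T dep) (effLaw a e) := by
  rintro u hA u' ⟨N, w, w', -, hN, hr, hw, hw'⟩
  have hAw := (PForm.sat_toM_iff_of_V_eq hw e.1).2 hA
  have hCw' := hN _ (Or.inl (Or.inl (Or.inr ⟨e, he, rfl⟩))) w hAw w' hr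
  exact (PForm.sat_toM_iff_of_V_eq hw' e.2).1 hCw'

theorem glob_fusedModel_inexLaw {a : Act} {A : PForm α} (hA : A ∈ T.I a) :
    Glob (fusedModel T dep) (inexLaw a A) := by
  rintro u hAu u' ⟨N, w, w', -, hN, hr, hw, -⟩
  have hAw := (PForm.sat_toM_iff_of_V_eq hw A).2 hAu
  exact hN _ (Or.inr ⟨A, hA, rfl⟩) w hAw w' hr

theorem glob_fusedModel_exeLaw [Fintype α] {a : Act} (hPS : PS T dep a) {A : PForm α}
    (hA : A ∈ T.X a) : Glob (fusedModel T dep) (exeLaw a A) := by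
  intro u hAu hnone
  obtain ⟨N, w, hNdep, hN, hw⟩ := exists_depModel_valuation_eq hPS u.2
  have hAw := (PForm.sat_toM_iff_of_V_eq hw A).2 hAu
  obtain ⟨w', hr⟩ : ∃ w', N.R a w w' := by
    by_contra! hstuck
    exact hN _ (Or.inl (Or.inr ⟨A, hA, rfl⟩)) w hAw fun w' hr => (hstuck w' hr).elim
  have hSw' : ∀ ψ ∈ T.S, ψ.Sat (N.V w') := fun ψ hψ =>
    (PForm.sat_toM N w' ψ).1 (hN _ (Or.inl (Or.inl (Or.inl ⟨ψ, hψ, rfl⟩))) w')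
  exact hnone ⟨N.V w', hSw'⟩ ⟨N, w, w', hNdep, hN, hr, hw, rfl⟩ id

theorem glob_fusedModel [Fintype α] (hPS : ∀ a, PS T dep a) :
    ∀ Ψ ∈ allForms T, Glob (fusedModel T dep) Ψ := by
  rintro Ψ (((⟨ψ, hψ, rfl⟩ | hΨ) | hΨ) | hΨ)
  · exact glob_fusedModel_static T dep hψ
  · obtain ⟨a, e, he, rfl⟩ := Set.mem_iUnion.1 hΨ
    exact glob_fusedModel_effLaw T dep he
  · obtain ⟨a, A, hA, rfl⟩ := Set.mem_iUnion.1 hΨ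
    exact glob_fusedModel_exeLaw T dep (hPS a) hA
  · obtain ⟨a, A, hA, rfl⟩ := Set.mem_iUnion.1 hΨ
    exact glob_fusedModel_inexLaw T dep hA

end ActionTheory

theorem stmt_9_general [Fintype α] (T : ActionTheory Act α) (dep : Dep Act α) :
    PSstar T dep ↔ ∀ a : Act, PS T dep a := by
  refine ⟨fun h a φ hφ => h φ (hφ.mono (formsFor_subset_allForms T a)), fun hPS φ hφ v hv => ?_⟩
  have hv' := hφ _ (T.isDepModel_fusedModel dep) (T.glob_fusedModel dep hPS) ⟨v, hv⟩
  exact (PForm.sat_toM _ _ φ).1 hv'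

/-- PS* holds iff PS holds for every individual action
(the logic being a fusion of monomodal K's). -/
theorem stmt_9 [Fintype Act] [Fintype α] (T : ActionTheory Act α) (dep : Dep Act α) :
    PSstar T dep ↔ ∀ a : Act, PS T dep a :=
  stmt_9_general T dep
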